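/- Let (X,d) be a distance space satisfying the extended four-point condition. Then T_d is non-empty, d∞(f,g) < ∞ for all f,g ∈ T_d (so (T_d,d∞) is a metric space), and (T_d,d∞) satisfies the classical four-point condition: d∞(f₁,f₂) + d∞(g₁,g₂) ≤ max{ d∞(f₁,g₁) + d∞(f₂,g₂), d∞(f₁,g₂) + d∞(f₂,g₁) } for all f₁,f₂,g₁,g₂ ∈ T_d. -/

import Mathlib

open scoped ENNReal

section CoreDefs

variable {Y : Type*}

/-- A distance space: symmetric, nonnegative, vanishing on the diagonal. -/
def IsDistance (d : Y → Y → ℝ) : Prop :=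
  (∀ x y, 0 ≤ d x y) ∧ (∀ x y, d x y = d y x) ∧ ∀ x, d x x = 0

/-- The set `P_d` of functions dominating the distance `d`. -/
def Pd (d : Y → Y → ℝ) : Set (Y → ℝ) :=
  {f | ∀ x y, d x y ≤ f x + f y}

/-- The tight span `T_d`: pointwise-minimal elements of `P_d`. -/
def Td (d : Y → Y → ℝ) : Set (Y → ℝ) :=
  {f | f ∈ Pd d ∧ ∀ g ∈ Pd d, g ≤ f → g = f}

/-- The sup-distance `d∞(f,g) = sup_x |f x - g x|`, valued in `[0,∞]`. -/
noncomputable def dInfty (f g : Y → ℝ) : ℝ≥0∞ :=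
  ⨆ y, edist (f y) (g y)

/-- `κ(x) = {f ∈ T_d : f x = 0}`. -/
def kappa (d : Y → Y → ℝ) (x : Y) : Set (Y → ℝ) :=
  {f | f ∈ Td d ∧ f x = 0}

/-- A pseudometric: symmetric, nonnegative, vanishing on the diagonal,
satisfying the triangle inequality. -/
def IsPseudometric (ρ : Y → Y → ℝ) : Prop :=
  (∀ x y, 0 ≤ ρ x y) ∧ (∀ x y, ρ x y = ρ y x) ∧ (∀ x, ρ x x = 0) ∧
  ∀ x y z, ρ x z ≤ ρ x y + ρ y z

/-- `M(d)`: the set of pseudometrics dominating `d`. -/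
def Md (d : Y → Y → ℝ) : Set (Y → Y → ℝ) :=
  {ρ | IsPseudometric ρ ∧ ∀ x y, d x y ≤ ρ x y}

end CoreDefs

section EFPCDef

variable {Y : Type*}

/-- The extended four-point condition of Hirai. -/
def EFPC (d : Y → Y → ℝ) : Prop :=
  ∀ w x y z : Y,
    d x y + d z w ≤
      max (d x y) (max (d w z) (max (d w x + d y z) (max (d x z + d w y)
        (max ((d x y + d y z + d z x) / 2) (max ((d x y + d y w + d w x) / 2)
          (max ((d x z + d z w + d w x) / 2) ((d y z + d z w + d w y) / 2)))))))

end EFPCDef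

/-! For `f, g ∈ T_d` tightness gives `f y = sup_x (d x y - f x)`, so `d∞(f, g)` is the supremum
of the defects `d x y - f x - g y`. The extended four-point condition at `x, y, z, w` bounds a
defect of `(f₁, f₂)` at `(x, y)` plus a defect of `(g₁, g₂)` at `(z, w)` by
`max (d∞(f₁,g₁) + d∞(f₂,g₂)) (d∞(f₁,g₂) + d∞(f₂,g₁))`, the degenerate alternatives being handled
by the triangle inequality for `d∞`. Applied to `p, q` with `d p q > 0`, the same condition gives
`d x y ≤ max (d x p) (d x q) + max (d y p) (d y q)`: this function of `x` lies in `P_d` (so `T_d`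
is nonempty by Zorn's lemma), and the inequality bounds all defects, so `d∞` is finite on `T_d`. -/

theorem ENNReal.add_le_max_add_add_of_toReal {p q a b c e : ℝ≥0∞} (hp : p ≠ ⊤) (hq : q ≠ ⊤)
    (ha : a ≠ ⊤) (hb : b ≠ ⊤) (hc : c ≠ ⊤) (he : e ≠ ⊤)
    (h : p.toReal + q.toReal ≤ max (a.toReal + b.toReal) (c.toReal + e.toReal)) :
    p + q ≤ max (a + b) (c + e) := by
  have hab := ENNReal.add_ne_top.2 ⟨ha, hb⟩
  have hce := ENNReal.add_ne_top.2 ⟨hc, he⟩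
  rwa [← ENNReal.toReal_le_toReal (ENNReal.add_ne_top.2 ⟨hp, hq⟩) (max_ne_top hab hce),
    ENNReal.toReal_max hab hce, ENNReal.toReal_add hp hq, ENNReal.toReal_add ha hb,
    ENNReal.toReal_add hc he]

section TightSpan

variable {X : Type*} {d : X → X → ℝ}

theorem nonneg_of_mem_Pd (hd : IsDistance d) {f : X → ℝ} (hf : f ∈ Pd d) (x : X) : 0 ≤ f x := by
  have := hf x x
  rw [hd.2.2 x] at this
  linarith

theorem sInf_mem_Pd_of_isChain {c : Set (X → ℝ)} (hc : c ⊆ Pd d)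
    (hchain : IsChain (· ≤ ·) c) (hne : c.Nonempty) : sInf c ∈ Pd d := by
  intro x₁ x₂
  have hsplit : ∀ g₁ ∈ c, ∀ g₂ ∈ c, d x₁ x₂ ≤ g₁ x₁ + g₂ x₂ := by
    intro g₁ hg₁ g₂ hg₂
    rcases hchain.total hg₁ hg₂ with h | h
    · linarith [hc hg₁ x₁ x₂, h x₂]
    · linarith [hc hg₂ x₁ x₂, h x₁]
  rw [sInf_apply_eq_sInf_image, sInf_apply_eq_sInf_image]
  suffices d x₁ x₂ - sInf ((fun g => g x₂) '' c) ≤ sInf ((fun g => g x₁) '' c) by linarith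
  refine le_csInf (hne.image _) ?_
  rintro _ ⟨g₁, hg₁, rfl⟩
  suffices d x₁ x₂ - g₁ x₁ ≤ sInf ((fun g => g x₂) '' c) by linarith
  refine le_csInf (hne.image _) ?_
  rintro _ ⟨g₂, hg₂, rfl⟩
  linarith [hsplit g₁ hg₁ g₂ hg₂]

theorem exists_mem_Td_le (hd : IsDistance d) {h : X → ℝ} (hh : h ∈ Pd d) :
    ∃ f ∈ Td d, f ≤ h := by
  have hbdd (c : Set (X → ℝ)) (hc : c ⊆ Pd d) : BddBelow c :=
    ⟨0, fun g hg x => nonneg_of_mem_Pd hd (hc hg) x⟩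
  obtain ⟨f, hfh, hf, hmin⟩ := zorn_le_nonempty₀ (α := (X → ℝ)ᵒᵈ) (OrderDual.ofDual ⁻¹' Pd d)
    (fun c hc hchain g hg => ⟨OrderDual.toDual (sInf (OrderDual.toDual ⁻¹' c)),
      sInf_mem_Pd_of_isChain hc hchain.symm ⟨g, hg⟩,
      fun _ hg' => csInf_le (hbdd _ hc) hg'⟩) h hh
  exact ⟨f, ⟨hf, fun g hg hgf => le_antisymm hgf (hmin hg hgf)⟩, hfh⟩

theorem exists_sub_lt_of_mem_Td (hd : IsDistance d) {f : X → ℝ} (hf : f ∈ Td d) (y : X)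
    {ε : ℝ} (hε : 0 < ε) : ∃ x, f y - ε < d x y - f x := by
  classical
  -- Otherwise lowering `f` at `y` by `ε / 2` stays in `P_d`, contradicting minimality.
  by_contra! hsmall
  have hy : ε ≤ 2 * f y := by linarith [hsmall y, hd.2.2 y]
  set g := Function.update f y (f y - ε / 2)
  have hg : g ∈ Pd d := by
    intro a b
    simp only [g, Function.update_apply]
    split_ifs with ha hb hb
    · rw [ha, hb, hd.2.2]; linarith
    · subst ha; linarith [hsmall b, hd.2.1 a b]
    · subst hb; linarith [hsmall a]
    · exact hf.1 a b
  have hgf : g ≤ f := by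
    intro a
    simp only [g, Function.update_apply]
    split_ifs with ha
    · rw [ha]; linarith
    · exact le_rfl
  have := congrFun (hf.2 g hg hgf) y
  simp only [g, Function.update_self] at this
  linarith

theorem sub_le_of_mem_Td (hd : IsDistance d) {f g : X → ℝ} (hf : f ∈ Td d) {y : X} {K : ℝ}
    (hK : ∀ x, d x y - f x - g y ≤ K) : f y - g y ≤ K := by
  refine le_of_forall_pos_lt_add fun ε hε => ?_
  obtain ⟨x, hx⟩ := exists_sub_lt_of_mem_Td hd hf y hε
  linarith [hK x]

theorem dInfty_comm (f g : X → ℝ) : dInfty f g = dInfty g f := by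
  simp only [dInfty, edist_comm]

theorem dInfty_triangle (f g h : X → ℝ) : dInfty f h ≤ dInfty f g + dInfty g h :=
  iSup_le fun y => (edist_triangle _ (g y) _).trans <|
    add_le_add (le_iSup (fun z => edist (f z) (g z)) y) (le_iSup (fun z => edist (g z) (h z)) y)

theorem ofReal_le_dInfty_of_mem_Pd {f : X → ℝ} (hf : f ∈ Pd d) (g : X → ℝ) (x y : X) :
    ENNReal.ofReal (d x y - f x - g y) ≤ dInfty f g := by
  calc ENNReal.ofReal (d x y - f x - g y) ≤ ENNReal.ofReal |f y - g y| :=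
        ENNReal.ofReal_le_ofReal <| by linarith [hf x y, le_abs_self (f y - g y)]
    _ = edist (f y) (g y) := by rw [edist_dist, Real.dist_eq]
    _ ≤ dInfty f g := le_iSup (fun z => edist (f z) (g z)) y

theorem dInfty_le_ofReal_of_mem_Td (hd : IsDistance d) {f g : X → ℝ} (hf : f ∈ Td d)
    (hg : g ∈ Td d) {K : ℝ} (hK : ∀ x y, d x y - f x - g y ≤ K) :
    dInfty f g ≤ ENNReal.ofReal K := by
  refine iSup_le fun y => ?_
  rw [edist_dist, Real.dist_eq]
  refine ENNReal.ofReal_le_ofReal (abs_sub_le_iff.2 ⟨sub_le_of_mem_Td hd hf (hK · y), ?_⟩)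
  exact sub_le_of_mem_Td hd hg fun x => by linarith [hK y x, hd.2.1 x y]

theorem EFPC.le_max_add_max (hd : IsDistance d) (h4 : EFPC d) {p q : X} (hpq : 0 < d p q)
    (x y : X) : d x y ≤ max (d x p) (d x q) + max (d y p) (d y q) := by
  have h8 := h4 q x y p
  simp only [le_max_iff] at h8
  have := le_max_left (d x p) (d x q)
  have := le_max_right (d x p) (d x q)
  have := le_max_left (d y p) (d y q)
  have := le_max_right (d y p) (d y q)
  rcases h8 with h | h | h | h | h | h | h | h <;>
    linarith [hd.1 x p, hd.1 y p, hd.2.1 q p, hd.2.1 q x, hd.2.1 q y, hd.2.1 p x]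

theorem EFPC.exists_mem_Pd (hd : IsDistance d) (h4 : EFPC d) : ∃ h, h ∈ Pd d := by
  by_cases hpos : ∃ p q, 0 < d p q
  · obtain ⟨p, q, hpq⟩ := hpos
    exact ⟨fun x => max (d x p) (d x q), h4.le_max_add_max hd hpq⟩
  · push Not at hpos
    exact ⟨0, fun x y => by simpa using hpos x y⟩

theorem EFPC.exists_defect_le (hd : IsDistance d) (h4 : EFPC d) {f g : X → ℝ}
    (hf : f ∈ Pd d) (hg : g ∈ Pd d) : ∃ K, ∀ x y, d x y - f x - g y ≤ K := by
  by_cases hpos : ∃ p q, 0 < d p q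
  · obtain ⟨p, q, hpq⟩ := hpos
    refine ⟨max (f p) (f q) + max (g p) (g q), fun x y => ?_⟩
    have hx : max (d x p) (d x q) ≤ f x + max (f p) (f q) :=
      max_le (by linarith [hf x p, le_max_left (f p) (f q)])
        (by linarith [hf x q, le_max_right (f p) (f q)])
    have hy : max (d y p) (d y q) ≤ g y + max (g p) (g q) :=
      max_le (by linarith [hg y p, le_max_left (g p) (g q)])
        (by linarith [hg y q, le_max_right (g p) (g q)])
    linarith [h4.le_max_add_max hd hpq x y]
  · push Not at hpos
    exact ⟨0, fun x y => by linarith [hpos x y, nonneg_of_mem_Pd hd hf x, nonneg_of_mem_Pd hd hg y]⟩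

theorem EFPC.dInfty_ne_top (hd : IsDistance d) (h4 : EFPC d) {f g : X → ℝ} (hf : f ∈ Td d)
    (hg : g ∈ Td d) : dInfty f g ≠ ⊤ := by
  obtain ⟨K, hK⟩ := h4.exists_defect_le hd hf.1 hg.1
  exact ne_top_of_le_ne_top ENNReal.ofReal_ne_top (dInfty_le_ofReal_of_mem_Td hd hf hg hK)

theorem EFPC.defect_add_defect_le (hd : IsDistance d) (h4 : EFPC d) {f₁ f₂ g₁ g₂ : X → ℝ}
    {x y z w : X} {a b c e : ℝ} (hf₁ : 0 ≤ f₁ x) (hf₂ : 0 ≤ f₂ y) (hg₁ : 0 ≤ g₁ z)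
    (hg₂ : 0 ≤ g₂ w) (ha : d x z - f₁ x - g₁ z ≤ a) (hb : d y w - f₂ y - g₂ w ≤ b)
    (hc : d x w - f₁ x - g₂ w ≤ c) (he : d y z - f₂ y - g₁ z ≤ e)
    (hf : d x y - f₁ x - f₂ y ≤ min (a + e) (c + b))
    (hg : d z w - g₁ z - g₂ w ≤ min (a + c) (e + b)) :
    (d x y - f₁ x - f₂ y) + (d z w - g₁ z - g₂ w) ≤ max (a + b) (c + e) := by
  -- In the four half-perimeter cases, twice the left side is bounded by `2 * max`.
  have h8 := h4 w x y z
  simp only [le_max_iff] at h8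
  have := le_max_left (a + b) (c + e)
  have := le_max_right (a + b) (c + e)
  have := min_le_left (a + e) (c + b)
  have := min_le_right (a + e) (c + b)
  have := min_le_left (a + c) (e + b)
  have := min_le_right (a + c) (e + b)
  rcases h8 with h | h | h | h | h | h | h | h <;>
    linarith [hd.2.1 w x, hd.2.1 w z, hd.2.1 w y, hd.2.1 z x]

theorem toReal_dInfty_le_of_mem_Td (hd : IsDistance d) {f g : X → ℝ} (hf : f ∈ Td d)
    (hg : g ∈ Td d) {K : ℝ} (hK₀ : 0 ≤ K) (hK : ∀ x y, d x y - f x - g y ≤ K) :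
    (dInfty f g).toReal ≤ K :=
  ENNReal.toReal_le_of_le_ofReal hK₀ (dInfty_le_ofReal_of_mem_Td hd hf hg hK)

theorem EFPC.defect_le_toReal_dInfty (hd : IsDistance d) (h4 : EFPC d) {f g : X → ℝ}
    (hf : f ∈ Td d) (hg : g ∈ Td d) (x y : X) : d x y - f x - g y ≤ (dInfty f g).toReal :=
  (ENNReal.ofReal_le_iff_le_toReal (h4.dInfty_ne_top hd hf hg)).1
    (ofReal_le_dInfty_of_mem_Pd hf.1 g x y)

theorem EFPC.toReal_dInfty_le_add (hd : IsDistance d) (h4 : EFPC d) {f g h : X → ℝ}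
    (hf : f ∈ Td d) (hg : g ∈ Td d) (hh : h ∈ Td d) :
    (dInfty g h).toReal ≤ (dInfty f g).toReal + (dInfty f h).toReal := by
  have hgf := h4.dInfty_ne_top hd hg hf
  have hfh := h4.dInfty_ne_top hd hf hh
  rw [dInfty_comm f g, ← ENNReal.toReal_add hgf hfh]
  exact ENNReal.toReal_mono (ENNReal.add_ne_top.2 ⟨hgf, hfh⟩) (dInfty_triangle g f h)

theorem EFPC.four_point_toReal (hd : IsDistance d) (h4 : EFPC d) {f₁ f₂ g₁ g₂ : X → ℝ}
    (hf₁ : f₁ ∈ Td d) (hf₂ : f₂ ∈ Td d) (hg₁ : g₁ ∈ Td d) (hg₂ : g₂ ∈ Td d) :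
    (dInfty f₁ f₂).toReal + (dInfty g₁ g₂).toReal ≤
      max ((dInfty f₁ g₁).toReal + (dInfty f₂ g₂).toReal)
        ((dInfty f₁ g₂).toReal + (dInfty f₂ g₁).toReal) := by
  have hdefect {f g : X → ℝ} (hf : f ∈ Td d) (hg : g ∈ Td d) :=
    h4.defect_le_toReal_dInfty hd hf hg
  have hf₁₂ : (dInfty f₁ f₂).toReal ≤
      min ((dInfty f₁ g₁).toReal + (dInfty f₂ g₁).toReal)
        ((dInfty f₁ g₂).toReal + (dInfty f₂ g₂).toReal) := by
    rw [dInfty_comm f₁ g₁, dInfty_comm f₂ g₁, dInfty_comm f₁ g₂, dInfty_comm f₂ g₂]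
    exact le_min (h4.toReal_dInfty_le_add hd hg₁ hf₁ hf₂) (h4.toReal_dInfty_le_add hd hg₂ hf₁ hf₂)
  have hg₁₂ : (dInfty g₁ g₂).toReal ≤
      min ((dInfty f₁ g₁).toReal + (dInfty f₁ g₂).toReal)
        ((dInfty f₂ g₁).toReal + (dInfty f₂ g₂).toReal) :=
    le_min (h4.toReal_dInfty_le_add hd hf₁ hg₁ hg₂) (h4.toReal_dInfty_le_add hd hf₂ hg₁ hg₂)
  have hpoint (x y z w : X) := h4.defect_add_defect_le hd (nonneg_of_mem_Pd hd hf₁.1 x)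
    (nonneg_of_mem_Pd hd hf₂.1 y) (nonneg_of_mem_Pd hd hg₁.1 z) (nonneg_of_mem_Pd hd hg₂.1 w)
    (hdefect hf₁ hg₁ x z) (hdefect hf₂ hg₂ y w) (hdefect hf₁ hg₂ x w) (hdefect hf₂ hg₁ y z)
    ((hdefect hf₁ hf₂ x y).trans hf₁₂) ((hdefect hg₁ hg₂ z w).trans hg₁₂)
  set a := (dInfty f₁ g₁).toReal
  set b := (dInfty f₂ g₂).toReal
  set c := (dInfty f₁ g₂).toReal
  set e := (dInfty f₂ g₁).toReal
  have hf₁₂r : (dInfty f₁ f₂).toReal ≤ max (a + b) (c + e) := by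
    linarith [min_le_left (a + e) (c + b), min_le_right (a + e) (c + b),
      le_max_left (a + b) (c + e), le_max_right (a + b) (c + e)]
  have hg₁₂r : (dInfty g₁ g₂).toReal ≤ max (a + b) (c + e) := by
    linarith [min_le_left (a + c) (e + b), min_le_right (a + c) (e + b),
      le_max_left (a + b) (c + e), le_max_right (a + b) (c + e)]
  -- Both sup-distances are suprema of defects, and `hpoint` bounds every sum of two defects.
  suffices (dInfty f₁ f₂).toReal ≤ max (a + b) (c + e) - (dInfty g₁ g₂).toReal by linarith
  refine toReal_dInfty_le_of_mem_Td hd hf₁ hf₂ (by linarith) fun x y => ?_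
  suffices (dInfty g₁ g₂).toReal ≤ max (a + b) (c + e) - (d x y - f₁ x - f₂ y) by linarith
  exact toReal_dInfty_le_of_mem_Td hd hg₁ hg₂ (by linarith [hdefect hf₁ hf₂ x y])
    fun z w => by linarith [hpoint x y z w]

end TightSpan

theorem statement13_general {X : Type*} (d : X → X → ℝ)
    (hd : IsDistance d) (h4 : EFPC d) :
    (Td d).Nonempty ∧
    (∀ f ∈ Td d, ∀ g ∈ Td d, dInfty f g ≠ ⊤) ∧
    ∀ f₁ ∈ Td d, ∀ f₂ ∈ Td d, ∀ g₁ ∈ Td d, ∀ g₂ ∈ Td d,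
      dInfty f₁ f₂ + dInfty g₁ g₂ ≤
        max (dInfty f₁ g₁ + dInfty f₂ g₂) (dInfty f₁ g₂ + dInfty f₂ g₁) := by
  have hfin {f g : X → ℝ} (hf : f ∈ Td d) (hg : g ∈ Td d) := h4.dInfty_ne_top hd hf hg
  refine ⟨?_, fun f hf g hg => hfin hf hg, fun f₁ hf₁ f₂ hf₂ g₁ hg₁ g₂ hg₂ => ?_⟩
  · obtain ⟨h, hh⟩ := h4.exists_mem_Pd hd
    obtain ⟨f, hf, -⟩ := exists_mem_Td_le hd hh
    exact ⟨f, hf⟩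
  · exact ENNReal.add_le_max_add_add_of_toReal (hfin hf₁ hf₂) (hfin hg₁ hg₂) (hfin hf₁ hg₁)
      (hfin hf₂ hg₂) (hfin hf₁ hg₂) (hfin hf₂ hg₁) (h4.four_point_toReal hd hf₁ hf₂ hg₁ hg₂)

/-- If `(X,d)` satisfies the extended four-point condition then `T_d` is
nonempty, all `d∞`-distances on `T_d` are finite, and `(T_d, d∞)` satisfies
the classical four-point condition. -/
theorem statement13 {X : Type*} [Nonempty X] (d : X → X → ℝ)
    (hd : IsDistance d) (h4 : EFPC d) :
    (Td d).Nonempty ∧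
    (∀ f ∈ Td d, ∀ g ∈ Td d, dInfty f g ≠ ⊤) ∧
    ∀ f₁ ∈ Td d, ∀ f₂ ∈ Td d, ∀ g₁ ∈ Td d, ∀ g₂ ∈ Td d,
      dInfty f₁ f₂ + dInfty g₁ g₂ ≤
        max (dInfty f₁ g₁ + dInfty f₂ g₂) (dInfty f₁ g₂ + dInfty f₂ g₁) :=
  statement13_general d hd h4
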